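/- arXiv:2501.00327 — 7 statements merged into one kernel-verified Lean document; each statement's English description precedes it below -/
import Mathlib

section
/- Given Hermitian observables A_1,...,A_m on C^d and any density matrix ρ (positive semidefinite, trace one), there exists a density matrix σ with rank(σ) < sqrt(m+2) such that Tr(A_j σ) = Tr(A_j ρ) for all j = 1,...,m. -/
open ComplexOrder

namespace LowRankAux

open Matrix

lemma rank_sandwich {n k : Type*} [Fintype n] [Fintype k] [DecidableEq n] [DecidableEq k]
    (P : Matrix n k ℂ) (P' : Matrix k n ℂ) (Q : Matrix k n ℂ) (Q' : Matrix n k ℂ)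
    (hP : P' * P = 1) (hQ : Q * Q' = 1) (M : Matrix k k ℂ) :
    (P * M * Q).rank = M.rank := by
  refine le_antisymm ?_ ?_
  · exact (Matrix.rank_mul_le_left (P * M) Q).trans (Matrix.rank_mul_le_right P M)
  · have h1 : P' * (P * M * Q) * Q' = M := by
      rw [Matrix.mul_assoc P M Q, ← Matrix.mul_assoc P' P, hP, Matrix.one_mul,
        Matrix.mul_assoc, hQ, Matrix.mul_one]
    calc M.rank = (P' * (P * M * Q) * Q').rank := by rw [h1]
      _ ≤ (P' * (P * M * Q)).rank := Matrix.rank_mul_le_left _ _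
      _ ≤ (P * M * Q).rank := Matrix.rank_mul_le_right _ _

lemma trace_eq_sum_eigenvalues {n : Type*} [Fintype n] [DecidableEq n]
    {C : Matrix n n ℂ} (hC : C.IsHermitian) :
    C.trace = ∑ i, (hC.eigenvalues i : ℂ) := by
  conv_lhs => rw [hC.spectral_theorem, Unitary.conjStarAlgAut_apply]
  rw [Matrix.trace_mul_comm, ← mul_assoc,
    Matrix.UnitaryGroup.star_mul_self, one_mul, Matrix.trace_diagonal]
  rfl

lemma psd_eq_zero_of_trace_eq_zero {n : Type*} [Fintype n] [DecidableEq n]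
    {C : Matrix n n ℂ} (hC : C.PosSemidef) (h : C.trace = 0) : C = 0 := by
  have hH := hC.1
  have htr : ∑ i, hH.eigenvalues i = 0 := by
    have := (trace_eq_sum_eigenvalues hH).symm.trans h
    exact_mod_cast this
  have hz : ∀ i ∈ Finset.univ, hH.eigenvalues i = 0 :=
    (Finset.sum_eq_zero_iff_of_nonneg (fun i _ => hC.eigenvalues_nonneg i)).mp htr
  have : Matrix.diagonal (RCLike.ofReal ∘ hH.eigenvalues) = (0 : Matrix n n ℂ) := by
    ext i j
    by_cases hij : i = j <;>
      simp [Matrix.diagonal, hij, hz j (Finset.mem_univ j), hz i (Finset.mem_univ i)]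
  conv_lhs => rw [hH.spectral_theorem, Unitary.conjStarAlgAut_apply]
  rw [this, mul_zero, zero_mul]

lemma conj_diag_apply {n k : Type*} [Fintype k] [DecidableEq k]
    (V : Matrix n k ℂ) (f : k → ℂ) (i j : n) :
    (V * Matrix.diagonal f * Vᴴ) i j = ∑ p, V i p * f p * star (V j p) := by
  rw [Matrix.mul_apply]
  refine Finset.sum_congr rfl fun p _ => ?_
  rw [Matrix.mul_diagonal, Matrix.conjTranspose_apply]

set_option maxHeartbeats 1000000 in
lemma reduce (d m : ℕ) (A : Fin m → Matrix (Fin d) (Fin d) ℂ)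
    (hA : ∀ j, (A j).IsHermitian)
    (σ : Matrix (Fin d) (Fin d) ℂ) (hσ : σ.PosSemidef)
    (hr : m + 1 < σ.rank * σ.rank) :
    ∃ σ' : Matrix (Fin d) (Fin d) ℂ, σ'.PosSemidef ∧ σ'.trace = σ.trace ∧
      σ'.rank < σ.rank ∧ ∀ j, (A j * σ').trace = (A j * σ).trace := by
  classical
  have hH := hσ.1
  set lam := hH.eigenvalues with hlam
  set U : Matrix (Fin d) (Fin d) ℂ := (hH.eigenvectorUnitary : Matrix (Fin d) (Fin d) ℂ) with hU
  set S := {i : Fin d // lam i ≠ 0} with hS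
  have hcard : σ.rank = Fintype.card S := hH.rank_eq_card_non_zero_eigs
  set V : Matrix (Fin d) S ℂ := Matrix.of (fun i p => U i p.1) with hVdef
  have hUU : Uᴴ * U = 1 := by
    rw [← Matrix.star_eq_conjTranspose]
    exact Matrix.UnitaryGroup.star_mul_self hH.eigenvectorUnitary
  have hV : Vᴴ * V = 1 := by
    ext p q
    have h1 : (Uᴴ * U) p.1 q.1 = (1 : Matrix (Fin d) (Fin d) ℂ) p.1 q.1 := by rw [hUU]
    simp only [Matrix.mul_apply, Matrix.conjTranspose_apply, Matrix.one_apply] at h1 ⊢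
    simp only [hVdef, Matrix.of_apply]
    rw [h1]
    by_cases hpq : p = q
    · simp [hpq]
    · rw [if_neg hpq, if_neg (fun h => hpq (Subtype.ext h))]
  set D : Matrix S S ℂ := Matrix.diagonal (fun p : S => (lam p.1 : ℂ)) with hDdef
  have hσD : σ = V * D * Vᴴ := by
    have hst := hH.spectral_theorem
    rw [Unitary.conjStarAlgAut_apply, ← hU, ← hlam, Matrix.star_eq_conjTranspose] at hst
    ext i k
    rw [conj_diag_apply]
    conv_lhs => rw [hst]
    rw [conj_diag_apply]
    have hstep1 : ∑ p : Fin d, U i p * (RCLike.ofReal ∘ lam) p * star (U k p)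
        = ∑ p ∈ Finset.univ.filter (fun j => lam j ≠ 0),
            U i p * (RCLike.ofReal ∘ lam) p * star (U k p) := by
      refine (Finset.sum_filter_of_ne ?_).symm
      intro j _ hne hz
      apply hne
      simp only [Function.comp_apply, hz]
      simp
    have hstep2 : ∑ p ∈ Finset.univ.filter (fun j => lam j ≠ 0),
            U i p * (RCLike.ofReal ∘ lam) p * star (U k p)
        = ∑ p : S, U i p.1 * (RCLike.ofReal ∘ lam) p.1 * star (U k p.1) := by
      refine Finset.sum_subtype _ (fun x => ?_) _
      simp
    rw [hstep1, hstep2]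
    rfl
  -- the linear map
  let Φ : Matrix S S ℂ →ₗ[ℂ] (Fin m → ℂ) × ℂ :=
    { toFun := fun B => (fun j => (A j * (V * B * Vᴴ)).trace, B.trace)
      map_add' := by
        intro B1 B2
        refine Prod.ext ?_ ?_
        · funext j
          simp [Matrix.mul_add, Matrix.add_mul, Matrix.trace_add]
        · simp [Matrix.trace_add]
      map_smul' := by
        intro c B
        refine Prod.ext ?_ ?_
        · funext j
          simp [Matrix.mul_smul, Matrix.smul_mul, Matrix.trace_smul]
        · simp }
  have hker : ∃ B : Matrix S S ℂ, B ≠ 0 ∧ Φ B = 0 := by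
    have hnotinj : ¬ Function.Injective Φ := by
      intro hinj
      have hle := LinearMap.finrank_le_finrank_of_injective hinj
      rw [Module.finrank_matrix, Module.finrank_prod, Module.finrank_pi,
        Module.finrank_self] at hle
      simp only [Fintype.card_fin] at hle
      rw [hcard] at hr
      omega
    rw [← LinearMap.ker_eq_bot] at hnotinj
    obtain ⟨B, hB, hBne⟩ := Submodule.ne_bot_iff _ |>.mp hnotinj
    exact ⟨B, hBne, hB⟩
  obtain ⟨B, hBne, hBker⟩ := hker
  have hB1 : ∀ j, (A j * (V * B * Vᴴ)).trace = 0 := fun j =>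
    congrFun (congrArg Prod.fst hBker) j
  have hB2 : B.trace = 0 := congrArg Prod.snd hBker
  have hB2' : Bᴴ.trace = 0 := by rw [Matrix.trace_conjTranspose, hB2, star_zero]
  have hconjtr : ∀ j (X : Matrix (Fin d) (Fin d) ℂ),
      (A j * Xᴴ).trace = star ((A j * X).trace) := by
    intro j X
    calc (A j * Xᴴ).trace = ((X * (A j)ᴴ)ᴴ).trace := by
          rw [Matrix.conjTranspose_mul, Matrix.conjTranspose_conjTranspose]
      _ = star ((X * (A j)ᴴ).trace) := Matrix.trace_conjTranspose _
      _ = star ((A j * X).trace) := by rw [(hA j).eq, Matrix.trace_mul_comm]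
  have hB1' : ∀ j, (A j * (V * Bᴴ * Vᴴ)).trace = 0 := by
    intro j
    have hX : V * Bᴴ * Vᴴ = (V * B * Vᴴ)ᴴ := by
      rw [Matrix.conjTranspose_mul, Matrix.conjTranspose_mul,
        Matrix.conjTranspose_conjTranspose, Matrix.mul_assoc]
    rw [hX, hconjtr j, hB1 j, star_zero]
  -- obtain a nonzero Hermitian kernel element
  obtain ⟨C, hCH, hCne, hCtr, hCA⟩ : ∃ C : Matrix S S ℂ, C.IsHermitian ∧ C ≠ 0 ∧
      C.trace = 0 ∧ ∀ j, (A j * (V * C * Vᴴ)).trace = 0 := by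
    by_cases hBs : B + Bᴴ = 0
    · refine ⟨Complex.I • (B - Bᴴ), ?_, ?_, ?_, ?_⟩
      · show (Complex.I • (B - Bᴴ))ᴴ = _
        rw [Matrix.conjTranspose_smul, Matrix.conjTranspose_sub,
          Matrix.conjTranspose_conjTranspose]
        rw [show (star Complex.I) = -Complex.I by simp [Complex.star_def, Complex.conj_I]]
        rw [neg_smul, ← smul_neg, neg_sub]
      · intro h
        apply hBne
        have hBB : Bᴴ = -B := eq_neg_of_add_eq_zero_right hBs
        have h2 : Complex.I • (B - Bᴴ) = (Complex.I * 2) • B := by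
          rw [hBB, sub_neg_eq_add, ← two_smul ℂ B, smul_smul]
        rw [h2] at h
        have h3 := congrArg (fun M => (Complex.I * 2)⁻¹ • M) h
        simp only [smul_smul, smul_zero] at h3
        rwa [inv_mul_cancel₀ (mul_ne_zero Complex.I_ne_zero two_ne_zero), one_smul] at h3
      · simp [Matrix.trace_smul, Matrix.trace_sub, hB2, hB2']
      · intro j
        have : V * (Complex.I • (B - Bᴴ)) * Vᴴ
            = Complex.I • (V * B * Vᴴ - V * Bᴴ * Vᴴ) := by
          simp only [Matrix.mul_smul, Matrix.smul_mul, Matrix.sub_mul, Matrix.mul_sub]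
        rw [this, mul_smul_comm, Matrix.trace_smul, Matrix.mul_sub, Matrix.trace_sub,
          hB1 j, hB1' j, sub_zero, smul_zero]
    · refine ⟨B + Bᴴ, ?_, hBs, ?_, ?_⟩
      · show (B + Bᴴ)ᴴ = _
        rw [Matrix.conjTranspose_add, Matrix.conjTranspose_conjTranspose, add_comm]
      · rw [Matrix.trace_add, hB2, hB2', add_zero]
      · intro j
        rw [Matrix.mul_add, Matrix.add_mul, Matrix.mul_add, Matrix.trace_add,
          hB1 j, hB1' j, add_zero]
  have hCnpsd : ¬ C.PosSemidef := fun h => hCne (psd_eq_zero_of_trace_eq_zero h hCtr)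
  have hlampos : ∀ p : S, 0 < lam p.1 := fun p =>
    lt_of_le_of_ne (hσ.eigenvalues_nonneg p.1) (Ne.symm p.2)
  have hsqrtne : ∀ p : S, Real.sqrt (lam p.1) ≠ 0 := fun p =>
    ne_of_gt (Real.sqrt_pos.mpr (hlampos p))
  set G : Matrix S S ℂ := Matrix.diagonal (fun p : S => (Real.sqrt (lam p.1) : ℂ)) with hGdef
  set W : Matrix S S ℂ := Matrix.diagonal (fun p : S => ((Real.sqrt (lam p.1))⁻¹ : ℂ)) with hWdef
  have hGW : G * W = 1 := by
    rw [hGdef, hWdef, Matrix.diagonal_mul_diagonal, ← Matrix.diagonal_one]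
    exact congrArg Matrix.diagonal
      (funext fun p => mul_inv_cancel₀ (Complex.ofReal_ne_zero.mpr (hsqrtne p)))
  have hWG : W * G = 1 := by
    rw [hWdef, hGdef, Matrix.diagonal_mul_diagonal, ← Matrix.diagonal_one]
    exact congrArg Matrix.diagonal
      (funext fun p => inv_mul_cancel₀ (Complex.ofReal_ne_zero.mpr (hsqrtne p)))
  have hGH : Gᴴ = G := by
    rw [hGdef, Matrix.diagonal_conjTranspose]
    refine congrArg Matrix.diagonal (funext fun p => ?_)
    simp [Pi.star_apply, Complex.star_def, Complex.conj_ofReal]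
  have hWH : Wᴴ = W := by
    rw [hWdef, Matrix.diagonal_conjTranspose]
    refine congrArg Matrix.diagonal (funext fun p => ?_)
    simp [Pi.star_apply, Complex.star_def, map_inv₀, Complex.conj_ofReal]
  have hGG : G * G = D := by
    rw [hGdef, hDdef, Matrix.diagonal_mul_diagonal]
    refine congrArg Matrix.diagonal (funext fun p => ?_)
    rw [← Complex.ofReal_mul, Real.mul_self_sqrt (le_of_lt (hlampos p))]

  set F : Matrix S S ℂ := W * C * W with hFdef
  have hFH : F.IsHermitian := by
    have h := Matrix.isHermitian_mul_mul_conjTranspose W hCH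
    rw [hWH] at h
    exact h
  have hFC : C = G * F * G := by
    rw [hFdef, Matrix.mul_assoc W C W, ← Matrix.mul_assoc G W, hGW, Matrix.one_mul,
      Matrix.mul_assoc C W G, hWG, Matrix.mul_one]
  have hFne : F ≠ 0 := fun h => hCne (by rw [hFC, h, Matrix.mul_zero, Matrix.zero_mul])
  have hFnpsd : ¬ F.PosSemidef := by
    intro h
    apply hCnpsd
    have h2 := h.mul_mul_conjTranspose_same G
    rw [hGH] at h2
    rw [hFC]
    exact h2
  set ν := hFH.eigenvalues with hν
  have hexneg : ∃ q, ν q < 0 := by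
    by_contra h
    push_neg at h
    exact hFnpsd (hFH.posSemidef_iff_eigenvalues_nonneg.mpr h)
  obtain ⟨q, hq⟩ := hexneg
  obtain ⟨p₀, _, hp₀⟩ := Finset.exists_min_image Finset.univ ν ⟨q, Finset.mem_univ q⟩
  set μ := ν p₀ with hμdef
  have hμ : μ < 0 := lt_of_le_of_lt (hp₀ q (Finset.mem_univ q)) hq
  set t : ℝ := -μ⁻¹ with ht
  have htpos : 0 < t := by
    rw [ht]
    simp only [neg_pos]
    exact inv_lt_zero.mpr hμ
  set g : S → ℝ := fun p => 1 + t * ν p with hg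
  have hg0 : ∀ p, 0 ≤ g p := by
    intro p
    have h1 : μ ≤ ν p := hp₀ p (Finset.mem_univ p)
    have h2 : μ⁻¹ * μ = 1 := inv_mul_cancel₀ (ne_of_lt hμ)
    rw [hg]
    dsimp only
    rw [ht]
    nlinarith [mul_le_mul_of_nonneg_left h1 (le_of_lt htpos)]
  have hgp₀ : g p₀ = 0 := by
    rw [hg]
    dsimp only
    rw [ht, ← hμdef, neg_mul, inv_mul_cancel₀ (ne_of_lt hμ)]
    ring
  set Uf : Matrix S S ℂ := (hFH.eigenvectorUnitary : Matrix S S ℂ) with hUf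
  have hUfUf : Ufᴴ * Uf = 1 := by
    rw [← Matrix.star_eq_conjTranspose]
    exact Matrix.UnitaryGroup.star_mul_self hFH.eigenvectorUnitary
  have hUfUf' : Uf * Ufᴴ = 1 := by
    rw [← Matrix.star_eq_conjTranspose]
    exact hFH.eigenvectorUnitary.2.2
  set Dg : Matrix S S ℂ := Matrix.diagonal (fun p => (g p : ℂ)) with hDg
  have hDgsplit : Dg = 1 + (t : ℂ) • Matrix.diagonal (RCLike.ofReal ∘ ν) := by
    rw [hDg]
    ext p r
    by_cases hpr : p = r
    · subst hpr
      simp only [Matrix.diagonal_apply_eq, Matrix.add_apply, Matrix.one_apply_eq,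
        Matrix.smul_apply, smul_eq_mul, Function.comp_apply, hg]
      push_cast
      norm_num [RCLike.ofReal_alg]
      try rfl
    · simp only [Matrix.diagonal_apply_ne _ hpr, Matrix.add_apply, Matrix.one_apply_ne hpr,
        Matrix.smul_apply, Matrix.diagonal_apply_ne _ hpr, smul_eq_mul, mul_zero, add_zero]
  have hsp : F = Uf * Matrix.diagonal (RCLike.ofReal ∘ ν) * Ufᴴ := by
    have h := hFH.spectral_theorem
    rwa [Unitary.conjStarAlgAut_apply, Matrix.star_eq_conjTranspose] at h
  have h1tF : (1 : Matrix S S ℂ) + (t : ℂ) • F = Uf * Dg * Ufᴴ := by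
    rw [hDgsplit]
    have : Uf * (1 + (t : ℂ) • Matrix.diagonal (RCLike.ofReal ∘ ν)) * Ufᴴ
        = Uf * 1 * Ufᴴ + (t : ℂ) • (Uf * Matrix.diagonal (RCLike.ofReal ∘ ν) * Ufᴴ) := by
      simp only [Matrix.mul_add, Matrix.add_mul, Matrix.mul_smul, Matrix.smul_mul]
    rw [this, Matrix.mul_one, hUfUf', ← hsp]
  have hNdecomp : D + (t : ℂ) • C = (G * Uf) * Dg * (G * Uf)ᴴ := by
    have hrhs : (G * Uf) * Dg * (G * Uf)ᴴ = G * (Uf * Dg * Ufᴴ) * G := by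
      rw [Matrix.conjTranspose_mul, hGH]
      simp only [Matrix.mul_assoc]
    have hexp : G * ((1 : Matrix S S ℂ) + (t : ℂ) • F) * G
        = G * 1 * G + (t : ℂ) • (G * F * G) := by
      simp only [Matrix.mul_add, Matrix.add_mul, Matrix.mul_smul, Matrix.smul_mul]
    rw [hrhs, ← h1tF, hexp, Matrix.mul_one, hGG, ← hFC]
  have hDgpsd : Dg.PosSemidef := by
    rw [hDg]
    refine Matrix.posSemidef_diagonal_iff.mpr ?_
    intro p
    exact Complex.zero_le_real.mpr (hg0 p)
  have hNpsd : (D + (t : ℂ) • C).PosSemidef := by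
    rw [hNdecomp]
    exact hDgpsd.mul_mul_conjTranspose_same (G * Uf)
  refine ⟨V * (D + (t : ℂ) • C) * Vᴴ, ?_, ?_, ?_, ?_⟩
  · exact hNpsd.mul_mul_conjTranspose_same V
  · have hVCV : (V * C * Vᴴ).trace = 0 := by
      rw [Matrix.trace_mul_comm, ← Matrix.mul_assoc, hV, Matrix.one_mul, hCtr]
    have hVDV : (V * D * Vᴴ).trace = σ.trace := by rw [← hσD]
    have hexp : V * (D + (t : ℂ) • C) * Vᴴ = V * D * Vᴴ + (t : ℂ) • (V * C * Vᴴ) := by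
      simp only [Matrix.mul_add, Matrix.add_mul, Matrix.mul_smul, Matrix.smul_mul]
    rw [hexp, Matrix.trace_add, Matrix.trace_smul, hVCV, smul_zero, add_zero, hVDV]
  · have hrank1 : (V * (D + (t : ℂ) • C) * Vᴴ).rank = (D + (t : ℂ) • C).rank :=
      rank_sandwich V Vᴴ Vᴴ V hV hV _
    have hrank2 : (D + (t : ℂ) • C).rank = Dg.rank := by
      rw [hNdecomp]
      refine rank_sandwich (G * Uf) (Ufᴴ * W) ((G * Uf)ᴴ) (W * Uf) ?_ ?_ _
      · rw [Matrix.mul_assoc Ufᴴ W _, ← Matrix.mul_assoc W G Uf, hWG, Matrix.one_mul, hUfUf]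
      · rw [Matrix.conjTranspose_mul, hGH, Matrix.mul_assoc Ufᴴ G _,
          ← Matrix.mul_assoc G W Uf, hGW, Matrix.one_mul, hUfUf]
    have hrank3 : Dg.rank = Fintype.card {p : S // (g p : ℂ) ≠ 0} := by
      rw [hDg]
      exact Matrix.rank_diagonal _
    rw [hrank1, hrank2, hrank3, hcard]
    refine Fintype.card_subtype_lt (x := p₀) ?_
    simp [hgp₀]
  · intro j
    have hσeq : V * (D + (t : ℂ) • C) * Vᴴ = σ + (t:ℂ) • (V * C * Vᴴ) := by
      have : V * (D + (t : ℂ) • C) * Vᴴ = V * D * Vᴴ + (t : ℂ) • (V * C * Vᴴ) := by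
        simp only [Matrix.mul_add, Matrix.add_mul, Matrix.mul_smul, Matrix.smul_mul]
      rw [this, ← hσD]
    rw [hσeq, Matrix.mul_add, Matrix.trace_add, mul_smul_comm, Matrix.trace_smul,
      hCA j, smul_zero, add_zero]



lemma main_aux (d m : ℕ) (A : Fin m → Matrix (Fin d) (Fin d) ℂ)
    (hA : ∀ j, (A j).IsHermitian) :
    ∀ n : ℕ, ∀ σ : Matrix (Fin d) (Fin d) ℂ, σ.PosSemidef → σ.rank = n →
      ∃ σ' : Matrix (Fin d) (Fin d) ℂ, σ'.PosSemidef ∧ σ'.trace = σ.trace ∧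
        σ'.rank * σ'.rank ≤ m + 1 ∧ ∀ j, (A j * σ').trace = (A j * σ).trace := by
  intro n
  induction n using Nat.strong_induction_on with
  | _ n ih =>
    intro σ hσ hrank
    by_cases h : σ.rank * σ.rank ≤ m + 1
    · exact ⟨σ, hσ, rfl, h, fun j => rfl⟩
    · obtain ⟨σ', h1, h2, h3, h4⟩ := reduce d m A hA σ hσ (lt_of_not_ge h)
      obtain ⟨σ'', g1, g2, g3, g4⟩ := ih σ'.rank (hrank ▸ h3) σ' h1 rfl
      exact ⟨σ'', g1, g2.trans h2, g3, fun j => (g4 j).trans (h4 j)⟩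

end LowRankAux

/-- **Existence of a low-rank solution in quantum state tomography.**
Given Hermitian observables `A 1, ..., A m` on `ℂ^d` and any density matrix `ρ`
(positive semidefinite, trace one), there exists a density matrix `σ` with
`rank σ < sqrt (m + 2)` reproducing all measurement outcomes `Tr (A j σ) = Tr (A j ρ)`. -/
theorem low_rank_solution_qst (d m : ℕ)
    (A : Fin m → Matrix (Fin d) (Fin d) ℂ)
    (hA : ∀ j, (A j).IsHermitian)
    (ρ : Matrix (Fin d) (Fin d) ℂ)
    (hρ : ρ.PosSemidef) (hρtr : ρ.trace = 1) :
    ∃ σ : Matrix (Fin d) (Fin d) ℂ,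
      σ.PosSemidef ∧ σ.trace = 1 ∧
      (σ.rank : ℝ) < Real.sqrt (m + 2) ∧
      ∀ j, (A j * σ).trace = (A j * ρ).trace := by
  obtain ⟨σ, h1, h2, h3, h4⟩ := LowRankAux.main_aux d m A hA ρ.rank ρ hρ rfl
  refine ⟨σ, h1, h2.trans hρtr, ?_, h4⟩
  rw [Real.lt_sqrt (by positivity)]
  have h5 : (σ.rank * σ.rank : ℝ) ≤ (m : ℝ) + 1 := by exact_mod_cast h3
  nlinarith [h5]
end

section
/- Let H be a nonzero Hermitian matrix with Tr(H) = 0 and whose support is contained in the support of a density matrix ρ. Then there exists ε > 0 such that ρ + εH is positive semidefinite and rank(ρ + εH) < rank(ρ). -/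
/-!
Let `R = √ρ` and let `S` be its pseudo-inverse, so that `RS` is the projection onto the
support of `ρ`. As `H` lives on that support, `H = R M R` for the Hermitian compression
`M = S H S`, and `ρ + εH = R (1 + εM) R`. `M` is not positive semidefinite, since otherwise
neither would `H` be, which is traceless and nonzero. If `μ < 0` is the least eigenvalue of `M`
and `ε = -1/μ`, then `1 + εM` is positive semidefinite and kills an eigenvector `w`, so `S w` is
killed by `ρ + εH` but not by `ρ`; since moreover `ker ρ ⊆ ker (ρ + εH)`, the rank drops.
-/

open ComplexOrder

namespace Matrix

open LinearMap (ker)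
open scoped MatrixOrder

section Kernel

variable {K : Type*} [Field K] {l m n : Type*} [Fintype n] [DecidableEq n]

lemma mul_eq_zero_of_ker_toLin'_le [Fintype m] [DecidableEq m] {A B : Matrix l m K}
    (h : ker (toLin' A) ≤ ker (toLin' B)) {X : Matrix m n K} (hX : A * X = 0) : B * X = 0 := by
  apply toLin'.injective
  rw [toLin'_mul, map_zero, ← LinearMap.range_le_ker_iff]
  exact (LinearMap.range_le_ker_iff.2 (by rw [← toLin'_mul, hX, map_zero])).trans h

lemma ker_toLin'_le_ker_toLin'_add_smul {A B : Matrix m n K} (h : ker (toLin' A) ≤ ker (toLin' B))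
    (c : K) : ker (toLin' A) ≤ ker (toLin' (A + c • B)) := fun x hx => by
  simp only [LinearMap.mem_ker, toLin'_apply, add_mulVec, smul_mulVec] at hx ⊢
  rw [hx, show B *ᵥ x = 0 from h hx, smul_zero, add_zero]

lemma rank_lt_rank_of_ker_toLin'_le {A B : Matrix m n K} (h : ker (toLin' A) ≤ ker (toLin' B))
    {u : n → K} (hBu : B *ᵥ u = 0) (hAu : A *ᵥ u ≠ 0) : B.rank < A.rank := by
  have hlt : ker (toLin' A) < ker (toLin' B) := SetLike.lt_iff_le_and_exists.2 ⟨h, u, hBu, hAu⟩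
  have := Submodule.finrank_lt_finrank_of_lt hlt
  have hA := LinearMap.finrank_range_add_finrank_ker (toLin' A)
  have hB := LinearMap.finrank_range_add_finrank_ker (toLin' B)
  unfold rank
  rw [← toLin'_apply', ← toLin'_apply']
  omega

end Kernel

variable {𝕜 : Type*} [RCLike 𝕜] {n : Type*} [Fintype n] [DecidableEq n]
  {A H M : Matrix n n 𝕜}

section LeastEigenvalue

lemma IsHermitian.posSemidef_sub_smul_one (hM : M.IsHermitian) {μ : ℝ}
    (h : ∀ i, μ ≤ hM.eigenvalues i) : (M - (μ : 𝕜) • 1).PosSemidef := by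
  have := hM.isSelfAdjoint
  have hle : algebraMap ℝ _ μ ≤ M := (algebraMap_le_iff_le_spectrum (a := M)).2 <| by
    rw [hM.spectrum_real_eq_range_eigenvalues]
    rintro _ ⟨i, rfl⟩
    exact h i
  rwa [le_iff, Algebra.algebraMap_eq_smul_one, RCLike.real_smul_eq_coe_smul (K := 𝕜)] at hle

lemma IsHermitian.exists_eigenvector_posSemidef_sub_smul_one [Nonempty n] (hM : M.IsHermitian) :
    ∃ (μ : ℝ) (w : n → 𝕜), w ≠ 0 ∧ M *ᵥ w = (μ : 𝕜) • w ∧ (M - (μ : 𝕜) • 1).PosSemidef := by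
  obtain ⟨i, hi⟩ := Finite.exists_min hM.eigenvalues
  refine ⟨hM.eigenvalues i, (hM.eigenvectorBasis i).ofLp, ?_, ?_, hM.posSemidef_sub_smul_one hi⟩
  · rw [Ne, WithLp.ofLp_eq_zero]
    exact hM.eigenvectorBasis.orthonormal.ne_zero i
  · rw [hM.mulVec_eigenvectorBasis, RCLike.real_smul_eq_coe_smul (K := 𝕜)]

lemma IsHermitian.exists_posSemidef_one_add_smul_of_not_posSemidef
    (hM : M.IsHermitian) (hM' : ¬ M.PosSemidef) :
    ∃ ε : ℝ, 0 < ε ∧ ∃ w ≠ 0, M *ᵥ w = (-ε⁻¹ : 𝕜) • w ∧ (1 + (ε : 𝕜) • M).PosSemidef := by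
  have : Nonempty n := by
    by_contra h
    rw [not_nonempty_iff] at h
    exact hM' (Subsingleton.elim 0 M ▸ PosSemidef.zero)
  obtain ⟨μ, w, hw, hMw, hpsd⟩ := hM.exists_eigenvector_posSemidef_sub_smul_one
  have hμ : μ < 0 := by
    refine lt_of_not_ge fun hμ => hM' ?_
    simpa using hpsd.add (PosSemidef.one.smul ((RCLike.ofReal_nonneg (K := 𝕜)).2 hμ))
  refine ⟨-μ⁻¹, by simpa using hμ, w, hw, by simpa using hMw, ?_⟩
  have hε : (0 : 𝕜) ≤ (-μ⁻¹ : ℝ) := RCLike.ofReal_nonneg.2 (by simpa using hμ.le)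
  -- `1 + εM = ε (M - μ)` for `ε = -μ⁻¹`
  convert hpsd.smul hε using 1
  have : (μ : 𝕜) ≠ 0 := RCLike.ofReal_ne_zero.2 hμ.ne
  rw [smul_sub, smul_smul]
  push_cast
  rw [neg_mul, inv_mul_cancel₀ this, neg_one_smul]
  abel

end LeastEigenvalue

section Compression

/-- Since `√0 = 0` and `0⁻¹ = 0`, this is the pseudo-inverse of `√A`: it vanishes on `ker A`. -/
noncomputable def invSqrt (A : Matrix n n 𝕜) : Matrix n n 𝕜 := cfc (fun x : ℝ => (√x)⁻¹) A

lemma invSqrt_conjTranspose (A : Matrix n n 𝕜) : (invSqrt A)ᴴ = invSqrt A :=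
  (cfc_predicate (fun x : ℝ => (√x)⁻¹) A).isHermitian.eq

lemma cfc_sqrt_conjTranspose (A : Matrix n n 𝕜) : (cfc Real.sqrt A)ᴴ = cfc Real.sqrt A :=
  (cfc_predicate Real.sqrt A).isHermitian.eq

lemma PosSemidef.cfc_sqrt_mul_self (hA : A.PosSemidef) :
    cfc Real.sqrt A * cfc Real.sqrt A = A := by
  have := hA.isHermitian.isSelfAdjoint
  rw [← cfc_mul Real.sqrt Real.sqrt A]
  conv_rhs => rw [← cfc_id' ℝ A]
  exact cfc_congr fun x hx => Real.mul_self_sqrt (spectrum_nonneg_of_nonneg hA.nonneg hx)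

lemma cfc_sqrt_mul_invSqrt_comm (A : Matrix n n 𝕜) :
    cfc Real.sqrt A * invSqrt A = invSqrt A * cfc Real.sqrt A :=
  cfc_commute_cfc _ _ A

lemma cfc_sqrt_mul_invSqrt_mul_invSqrt (A : Matrix n n 𝕜) :
    cfc Real.sqrt A * invSqrt A * invSqrt A = invSqrt A := by
  have hcont (f : ℝ → ℝ) := A.finite_real_spectrum.continuousOn f
  rw [invSqrt, ← cfc_mul _ _ A (hcont _) (hcont _), ← cfc_mul _ _ A (hcont _) (hcont _)]
  refine cfc_congr fun x _ => ?_
  by_cases h : √x = 0 <;> field_simp [h]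

lemma PosSemidef.mul_cfc_sqrt_mul_invSqrt (hA : A.PosSemidef) :
    A * cfc Real.sqrt A * invSqrt A = A := by
  have := hA.isHermitian.isSelfAdjoint
  have hcont (f : ℝ → ℝ) := A.finite_real_spectrum.continuousOn f
  nth_rw 1 [← cfc_id' ℝ A]
  rw [invSqrt, ← cfc_mul _ _ A (hcont _) (hcont _), ← cfc_mul _ _ A (hcont _) (hcont _)]
  conv_rhs => rw [← cfc_id' ℝ A]
  refine cfc_congr fun x hx => ?_
  rcases (spectrum_nonneg_of_nonneg hA.nonneg hx).eq_or_lt with rfl | hx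
  · simp
  · field_simp [(Real.sqrt_pos.2 hx).ne']

/-- `√A * invSqrt A` is the projection onto the support of `A`, so it fixes `H` on both sides. -/
lemma PosSemidef.cfc_sqrt_mul_mul_invSqrt_mul_cfc_sqrt (hA : A.PosSemidef)
    (hH : H.IsHermitian) (hker : ker (toLin' A) ≤ ker (toLin' H)) :
    cfc Real.sqrt A * (invSqrt A * H * invSqrt A) * cfc Real.sqrt A = H := by
  set P := cfc Real.sqrt A * invSqrt A
  have hHP : H * P = H := by
    have : H * (1 - P) = 0 := mul_eq_zero_of_ker_toLin'_le hker <| by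
      rw [mul_sub, mul_one, ← mul_assoc, hA.mul_cfc_sqrt_mul_invSqrt, sub_self]
    rwa [mul_sub, mul_one, sub_eq_zero, eq_comm] at this
  have hPH : P * H = H := by
    have hP : Pᴴ = P := by
      rw [conjTranspose_mul, invSqrt_conjTranspose, cfc_sqrt_conjTranspose,
        ← cfc_sqrt_mul_invSqrt_comm]
    rw [← hP, ← hH.eq, ← conjTranspose_mul, hH.eq, hHP, hH.eq]
  calc cfc Real.sqrt A * (invSqrt A * H * invSqrt A) * cfc Real.sqrt A
      = P * H * (invSqrt A * cfc Real.sqrt A) := by simp only [P, mul_assoc]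
    _ = H := by rw [← cfc_sqrt_mul_invSqrt_comm, hPH, hHP]

end Compression

end Matrix

open Matrix

theorem rank_reduction_step_general (d : ℕ)
    (ρ H : Matrix (Fin d) (Fin d) ℂ)
    (hρ : ρ.PosSemidef)
    (hH : H.IsHermitian) (hHtr : H.trace = 0) (hH0 : H ≠ 0)
    (hker : LinearMap.ker (Matrix.toLin' ρ) ≤ LinearMap.ker (Matrix.toLin' H)) :
    ∃ ε : ℝ, 0 < ε ∧ (ρ + (ε : ℂ) • H).PosSemidef ∧
      (ρ + (ε : ℂ) • H).rank < ρ.rank := by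
  set R := cfc Real.sqrt ρ
  set S := invSqrt ρ
  have hRMR : R * (S * H * S) * R = H := hρ.cfc_sqrt_mul_mul_invSqrt_mul_cfc_sqrt hH hker
  have hM : (S * H * S).IsHermitian := by
    simpa [S, invSqrt_conjTranspose] using isHermitian_conjTranspose_mul_mul S hH
  have hM' : ¬ (S * H * S).PosSemidef := fun h => hH0 <| by
    have := h.conjTranspose_mul_mul_same R
    rw [cfc_sqrt_conjTranspose, hRMR] at this
    exact this.trace_eq_zero_iff.1 hHtr
  obtain ⟨ε, hε, w, hw, hMw, hpsd⟩ := hM.exists_posSemidef_one_add_smul_of_not_posSemidef hM'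
  have hdecomp : ρ + (ε : ℂ) • H = R * (1 + (ε : ℂ) • (S * H * S)) * R := by
    rw [mul_add, add_mul, mul_one, hρ.cfc_sqrt_mul_self, mul_smul_comm, smul_mul_assoc, hRMR]
  have hw_eq : w = (S * H * S) *ᵥ (-(ε : ℂ) • w) := by
    rw [mulVec_smul, hMw, smul_smul]
    simp [hε.ne']
  have hRSw : R *ᵥ (S *ᵥ w) = w := by
    conv_lhs => rw [hw_eq]
    rw [mulVec_mulVec, mulVec_mulVec]
    simp only [← mul_assoc]
    rw [cfc_sqrt_mul_invSqrt_mul_invSqrt, ← hw_eq]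
  refine ⟨ε, hε, ?_, rank_lt_rank_of_ker_toLin'_le (ker_toLin'_le_ker_toLin'_add_smul hker _)
    (u := S *ᵥ w) ?_ ?_⟩
  · rw [hdecomp]
    simpa [R, cfc_sqrt_conjTranspose] using hpsd.conjTranspose_mul_mul_same R
  · rw [hdecomp, ← mulVec_mulVec, ← mulVec_mulVec, hRSw, add_mulVec, one_mulVec, smul_mulVec,
      hMw, smul_smul]
    simp [hε.ne']
  · intro hρu
    have hHu : H *ᵥ (S *ᵥ w) = 0 := hker hρu
    have hMw0 : (S * H * S) *ᵥ w = 0 := by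
      rw [← mulVec_mulVec, ← mulVec_mulVec, hHu, mulVec_zero]
    rw [hMw, smul_eq_zero] at hMw0
    exact hMw0.resolve_left (by simpa using hε.ne') |> hw

/-- If `H` is a nonzero traceless Hermitian matrix whose support is contained in the
support of a density matrix `ρ` (i.e. `H` kills `ker ρ` and its range lies in the range
of `ρ`), then for some `ε > 0` the matrix `ρ + ε H` is positive semidefinite with
strictly smaller rank than `ρ`. -/
theorem rank_reduction_step (d : ℕ)
    (ρ H : Matrix (Fin d) (Fin d) ℂ)
    (hρ : ρ.PosSemidef) (hρtr : ρ.trace = 1)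
    (hH : H.IsHermitian) (hHtr : H.trace = 0) (hH0 : H ≠ 0)
    (hker : LinearMap.ker (Matrix.toLin' ρ) ≤ LinearMap.ker (Matrix.toLin' H))
    (hrange : LinearMap.range (Matrix.toLin' H) ≤ LinearMap.range (Matrix.toLin' ρ)) :
    ∃ ε : ℝ, 0 < ε ∧ (ρ + (ε : ℂ) • H).PosSemidef ∧
      (ρ + (ε : ℂ) • H).rank < ρ.rank :=
  rank_reduction_step_general d ρ H hρ hH hHtr hH0 hker
end

section
/- Given Hermitian observables A_1,...,A_m on C^d and a unit vector ψ, for any density matrix ρ there exists a density matrix σ with rank(σ) < sqrt(m+3) such that Tr(|ψ⟩⟨ψ| σ) = Tr(|ψ⟩⟨ψ| ρ) and Tr(A_j σ) = Tr(A_j ρ) for all j. -/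
open ComplexOrder

open Matrix

private lemma aux_pert {α : Type*} [Fintype α] [DecidableEq α] {K : Matrix α α ℂ}
    (hK : K.IsHermitian) (h0 : K ≠ 0) :
    ∃ t : ℝ, (1 + (t : ℂ) • K).PosSemidef ∧ (1 + (t : ℂ) • K).rank < Fintype.card α := by
  set U : Matrix α α ℂ := (hK.eigenvectorUnitary : Matrix α α ℂ) with hU
  set μ : α → ℝ := hK.eigenvalues with hμ
  -- some eigenvalue is nonzero
  have hμne : ∃ i, μ i ≠ 0 := by
    by_contra h
    push_neg at h
    apply h0
    have := hK.spectral_theorem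
    have hdiag : diagonal (RCLike.ofReal ∘ μ) = (0 : Matrix α α ℂ) := by
      have : (RCLike.ofReal ∘ μ : α → ℂ) = 0 := by
        funext i; simp [h i]
      rw [this]
      ext i j; simp [diagonal]
    rw [hdiag, map_zero] at this
    exact this
  obtain ⟨i₁, hi₁⟩ := hμne
  haveI : Nonempty α := ⟨i₁⟩
  obtain ⟨i₀, -, hmax⟩ := Finset.exists_max_image Finset.univ (fun i => |μ i|) ⟨i₁, Finset.mem_univ _⟩
  have hmax' : ∀ i, |μ i| ≤ |μ i₀| := fun i => hmax i (Finset.mem_univ _)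
  have hi₀ : μ i₀ ≠ 0 := by
    intro h
    have := hmax' i₁
    rw [h, abs_zero] at this
    exact hi₁ (abs_nonpos_iff.mp this)
  set t : ℝ := -(μ i₀)⁻¹ with ht
  set f : α → ℝ := fun i => 1 + t * μ i with hf
  have hfnonneg : ∀ i, 0 ≤ f i := by
    intro i
    have h1 : μ i / μ i₀ ≤ 1 := by
      calc μ i / μ i₀ ≤ |μ i / μ i₀| := le_abs_self _
        _ = |μ i| / |μ i₀| := abs_div _ _
        _ ≤ 1 := by
          rw [div_le_one (abs_pos.mpr hi₀)]
          exact hmax' i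
    have : f i = 1 - μ i / μ i₀ := by
      simp [hf, ht, div_eq_mul_inv, mul_comm]
      ring
    rw [this]; linarith
  have hfi₀ : f i₀ = 0 := by
    simp [hf, ht]
    field_simp
    norm_num
  have hE : 1 + (t : ℂ) • K = U * diagonal (fun i => (f i : ℂ)) * star U := by
    have h1 : (1 : Matrix α α ℂ) = U * 1 * star U := by
      rw [mul_one, Matrix.mem_unitaryGroup_iff.mp hK.eigenvectorUnitary.2]
    have h2 : (t : ℂ) • K = U * ((t : ℂ) • diagonal (RCLike.ofReal ∘ μ)) * star U := by
      conv_lhs => rw [hK.spectral_theorem]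
      rw [Matrix.mul_smul, Matrix.smul_mul]
      rfl
    calc (1 : Matrix α α ℂ) + (t : ℂ) • K
        = U * 1 * star U + U * ((t : ℂ) • diagonal (RCLike.ofReal ∘ μ)) * star U := by
          rw [← h1, ← h2]
      _ = U * (1 + (t : ℂ) • diagonal (RCLike.ofReal ∘ μ)) * star U := by
          simp [Matrix.add_mul, Matrix.mul_add]
      _ = U * diagonal (fun i => (f i : ℂ)) * star U := by
          congr 2
          rw [← Matrix.diagonal_smul, ← diagonal_one, diagonal_add]
          congr 1
          funext i
          simp only [hf, Pi.add_apply, Pi.smul_apply, Function.comp_apply, Pi.one_apply,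
            smul_eq_mul]
          push_cast
          rfl
  refine ⟨t, ?_, ?_⟩
  · rw [hE]
    have hdiag : (diagonal (fun i => (f i : ℂ))).PosSemidef := by
      rw [posSemidef_diagonal_iff]
      intro i
      exact Complex.zero_le_real.mpr (hfnonneg i)
    simpa [star_eq_conjTranspose] using hdiag.mul_mul_conjTranspose_same U
  · rw [hE]
    calc (U * diagonal (fun i => (f i : ℂ)) * star U).rank
        ≤ (diagonal (fun i => (f i : ℂ))).rank := by
          refine le_trans (rank_mul_le_left _ _) ?_
          exact rank_mul_le_right _ _
      _ = Fintype.card {i // (f i : ℂ) ≠ 0} := rank_diagonal _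
      _ < Fintype.card α := by
          apply Fintype.card_subtype_lt (x := i₀)
          simp [hfi₀]


private lemma trace_hermitian_conjT {n : Type*} [Fintype n] (B X : Matrix n n ℂ) (hB : B.IsHermitian) :
    (B * Xᴴ).trace = star ((B * X).trace) := by
  have : B * Xᴴ = (X * Bᴴ)ᴴ := by
    rw [conjTranspose_mul, conjTranspose_conjTranspose]
  rw [this, trace_conjTranspose, hB.eq, trace_mul_comm]

private lemma diag_step {d : ℕ} {ι : Type} [Fintype ι] (w : Fin d → ℝ) (hw : ∀ i, 0 ≤ w i)
    (B : ι → Matrix (Fin d) (Fin d) ℂ) (hB : ∀ k, (B k).IsHermitian)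
    (hc : Fintype.card ι < (Fintype.card {i // w i ≠ 0}) ^ 2) :
    ∃ σ : Matrix (Fin d) (Fin d) ℂ, σ.PosSemidef ∧
      σ.rank < (Matrix.diagonal (fun i => (w i : ℂ))).rank ∧
      ∀ k, (B k * σ).trace = (B k * Matrix.diagonal (fun i => (w i : ℂ))).trace := by
  classical
  set s := {i : Fin d // w i ≠ 0}
  set Q : Matrix (Fin d) s ℂ := fun i a => if i = (a : Fin d) then (Real.sqrt (w i) : ℂ) else 0
    with hQ
  have key : Q * Qᴴ = Matrix.diagonal (fun i => (w i : ℂ)) := by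
    ext i j
    rw [mul_apply]
    simp only [conjTranspose_apply]
    by_cases hij : i = j
    · subst hij
      by_cases hi : w i ≠ 0
      · rw [Finset.sum_eq_single (⟨i, hi⟩ : s)]
        · simp only [hQ, if_pos rfl]
          rw [RCLike.star_def, Complex.conj_ofReal, ← Complex.ofReal_mul,
            Real.mul_self_sqrt (hw i), diagonal_apply_eq]
        · intro b _ hb
          simp only [hQ]
          rw [if_neg (fun h => hb (Subtype.ext h.symm))]
          simp
        · simp
      · push_neg at hi
        have hz : ∀ a : s, Q i a = 0 := fun a => by
          simp only [hQ]; exact if_neg (fun h => a.2 (by rw [← h]; exact hi))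
        simp [hz, diagonal_apply_eq, hi]
    · have hz : ∀ a : s, Q i a * (starRingEnd ℂ) (Q j a) = 0 := by
        intro a
        by_cases hia : i = (a : Fin d)
        · have hja : ¬ j = (a : Fin d) := fun h => hij (hia.trans h.symm)
          simp [hQ, hja]
        · simp [hQ, hia]
      rw [diagonal_apply_ne _ hij]
      exact Finset.sum_eq_zero fun a _ => hz a
  -- the constraint map
  set L : Matrix s s ℂ →ₗ[ℂ] (ι → ℂ) :=
    { toFun := fun N k => (B k * (Q * N * Qᴴ)).trace
      map_add' := by
        intro x y
        funext k
        simp [Matrix.mul_add, Matrix.add_mul, trace_add]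
      map_smul' := by
        intro c x
        funext k
        simp [Matrix.mul_smul, Matrix.smul_mul, trace_smul] } with hL
  have hdim : Fintype.card ι < Module.finrank ℂ (Matrix s s ℂ) := by
    have h2 : Module.finrank ℂ (Matrix s s ℂ) = Fintype.card s * Fintype.card s := by
      rw [Module.finrank_matrix, Module.finrank_self, mul_one]
    rw [h2, ← sq]
    exact hc
  -- find a nonzero element of the kernel
  have hker : ∃ N : Matrix s s ℂ, N ≠ 0 ∧ L N = 0 := by
    by_contra h
    push_neg at h
    have hinj : Function.Injective L := by
      intro x y hxy
      by_contra hne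
      exact h (x - y) (sub_ne_zero.mpr hne) (by rw [map_sub, hxy, sub_self])
    have := LinearMap.finrank_le_finrank_of_injective hinj
    rw [Module.finrank_fintype_fun_eq_card] at this
    omega
  obtain ⟨N, hN0, hLN⟩ := hker
  -- L vanishes on Nᴴ too
  have hLNH : L Nᴴ = 0 := by
    funext k
    have h1 : Q * Nᴴ * Qᴴ = (Q * N * Qᴴ)ᴴ := by
      rw [conjTranspose_mul, conjTranspose_mul, conjTranspose_conjTranspose, Matrix.mul_assoc]
    show (B k * (Q * Nᴴ * Qᴴ)).trace = 0
    rw [h1, trace_hermitian_conjT _ _ (hB k)]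
    have : (B k * (Q * N * Qᴴ)).trace = 0 := congrFun hLN k
    rw [this, star_zero]
  -- get a nonzero Hermitian element of the kernel
  have hKex : ∃ K : Matrix s s ℂ, K.IsHermitian ∧ K ≠ 0 ∧ L K = 0 := by
    by_cases h1 : N + Nᴴ ≠ 0
    · refine ⟨N + Nᴴ, ?_, h1, ?_⟩
      · rw [Matrix.IsHermitian, conjTranspose_add, conjTranspose_conjTranspose, add_comm]
      · rw [map_add, hLN, hLNH, add_zero]
    · push_neg at h1
      refine ⟨Complex.I • (N - Nᴴ), ?_, ?_, ?_⟩
      · show (Complex.I • (N - Nᴴ))ᴴ = _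
        rw [conjTranspose_smul, conjTranspose_sub, conjTranspose_conjTranspose]
        rw [show star Complex.I = -Complex.I from Complex.conj_I]
        rw [neg_smul, smul_sub, smul_sub, neg_sub]
      · apply smul_ne_zero Complex.I_ne_zero
        intro h2
        apply hN0
        have : N + N = 0 := by
          have := congrArg₂ (· + ·) h1 h2
          simpa [add_add_sub_cancel] using this
        have h3 : (2 : ℂ) • N = 0 := by rw [two_smul]; exact this
        simpa using (smul_eq_zero.mp h3).resolve_left (by norm_num)
      · rw [_root_.map_smul, map_sub, hLN, hLNH, sub_self, smul_zero]
  obtain ⟨K, hKH, hK0, hLK⟩ := hKex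
  obtain ⟨t, hPSD, hrank⟩ := aux_pert hKH hK0
  refine ⟨Q * (1 + (t : ℂ) • K) * Qᴴ, hPSD.mul_mul_conjTranspose_same Q, ?_, ?_⟩
  · calc (Q * (1 + (t : ℂ) • K) * Qᴴ).rank
        ≤ (1 + (t : ℂ) • K).rank := by
          refine le_trans (rank_mul_le_left _ _) ?_
          exact rank_mul_le_right _ _
      _ < Fintype.card s := hrank
      _ = (diagonal (fun i => (w i : ℂ))).rank := by
          rw [rank_diagonal]
          apply Fintype.card_congr
          apply Equiv.subtypeEquivRight
          intro i
          simp [Complex.ofReal_eq_zero]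
  · intro k
    have hexp : Q * (1 + (t : ℂ) • K) * Qᴴ
        = diagonal (fun i => (w i : ℂ)) + (t : ℂ) • (Q * K * Qᴴ) := by
      rw [Matrix.mul_add, Matrix.add_mul, Matrix.mul_one, key, Matrix.mul_smul,
        Matrix.smul_mul]
    rw [hexp, Matrix.mul_add, trace_add, Matrix.mul_smul, trace_smul]
    have : (B k * (Q * K * Qᴴ)).trace = 0 := congrFun hLK k
    rw [this, smul_zero, add_zero]

private lemma reduce {d : ℕ} {ι : Type} [Fintype ι] (B : ι → Matrix (Fin d) (Fin d) ℂ)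
    (hB : ∀ k, (B k).IsHermitian) :
    ∀ r : ℕ, ∀ ρ : Matrix (Fin d) (Fin d) ℂ, ρ.PosSemidef → ρ.rank ≤ r →
    ∃ σ : Matrix (Fin d) (Fin d) ℂ, σ.PosSemidef ∧ σ.rank ^ 2 ≤ Fintype.card ι ∧
      ∀ k, (B k * σ).trace = (B k * ρ).trace := by
  classical
  intro r
  induction r with
  | zero =>
    intro ρ hρ hr
    refine ⟨ρ, hρ, ?_, fun k => rfl⟩
    have : ρ.rank = 0 := Nat.le_zero.mp hr
    simp [this]
  | succ r ih =>
    intro ρ hρ hr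
    by_cases hle : ρ.rank ^ 2 ≤ Fintype.card ι
    · exact ⟨ρ, hρ, hle, fun k => rfl⟩
    · push_neg at hle
      have hH : ρ.IsHermitian := hρ.1
      set U : Matrix (Fin d) (Fin d) ℂ := (hH.eigenvectorUnitary : Matrix (Fin d) (Fin d) ℂ)
        with hU
      set w : Fin d → ℝ := hH.eigenvalues with hw
      have hwn : ∀ i, 0 ≤ w i := hρ.eigenvalues_nonneg
      have hrankcard : ρ.rank = Fintype.card {i // w i ≠ 0} := hH.rank_eq_card_non_zero_eigs
      have hc : Fintype.card ι < (Fintype.card {i // w i ≠ 0}) ^ 2 := by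
        rw [← hrankcard]; exact hle
      have hB' : ∀ k, ((star U) * B k * U).IsHermitian := by
        intro k
        rw [Matrix.IsHermitian]
        simp only [star_eq_conjTranspose]
        rw [conjTranspose_mul, conjTranspose_mul, conjTranspose_conjTranspose, (hB k).eq,
          ← Matrix.mul_assoc]
      obtain ⟨σ', h1, h2, h3⟩ := diag_step w hwn (fun k => (star U) * B k * U) hB' hc
      have hDrank : (diagonal (fun i => (w i : ℂ))).rank = ρ.rank := by
        rw [rank_diagonal, hrankcard]
        apply Fintype.card_congr
        apply Equiv.subtypeEquivRight
        intro i
        simp [Complex.ofReal_eq_zero]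
      have hspec : ρ = U * diagonal (fun i => (w i : ℂ)) * star U := by
        have := hH.spectral_theorem
        convert this using 2
        rfl
      have hσ₀rank : (U * σ' * star U).rank ≤ r := by
        have : (U * σ' * star U).rank ≤ σ'.rank := by
          refine le_trans (rank_mul_le_left _ _) ?_
          exact rank_mul_le_right _ _
        have h2' : σ'.rank < ρ.rank := hDrank ▸ h2
        omega
      obtain ⟨σ, g1, g2, g3⟩ := ih (U * σ' * star U)
        (by simpa [star_eq_conjTranspose] using h1.mul_mul_conjTranspose_same U) hσ₀rank
      refine ⟨σ, g1, g2, ?_⟩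
      intro k
      rw [g3 k]
      have cyc : ∀ X : Matrix (Fin d) (Fin d) ℂ,
          (B k * (U * X * star U)).trace = ((star U * B k * U) * X).trace := by
        intro X
        rw [show B k * (U * X * star U) = (B k * (U * X)) * star U by
          simp only [Matrix.mul_assoc]]
        rw [trace_mul_comm, ← Matrix.mul_assoc, ← Matrix.mul_assoc, Matrix.mul_assoc]
      rw [cyc σ', h3 k, ← cyc (diagonal (fun i => (w i : ℂ))), ← hspec]


/-- **Equivalent low-rank density matrix for the UDA problem.**
Given Hermitian observables `A 1, ..., A m` on `ℂ^d` and a unit vector `ψ`, for any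
density matrix `ρ` there is a density matrix `σ` with `rank σ < sqrt (m + 3)` such that
`Tr(|ψ⟩⟨ψ| σ) = Tr(|ψ⟩⟨ψ| ρ)` and `Tr(A j σ) = Tr(A j ρ)` for all `j`. -/
theorem low_rank_solution_uda (d m : ℕ)
    (A : Fin m → Matrix (Fin d) (Fin d) ℂ)
    (hA : ∀ j, (A j).IsHermitian)
    (ψ : Fin d → ℂ) (hψ : ∑ i, star (ψ i) * ψ i = 1)
    (ρ : Matrix (Fin d) (Fin d) ℂ)
    (hρ : ρ.PosSemidef) (hρtr : ρ.trace = 1) :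
    ∃ σ : Matrix (Fin d) (Fin d) ℂ,
      σ.PosSemidef ∧ σ.trace = 1 ∧
      (σ.rank : ℝ) < Real.sqrt (m + 3) ∧
      (Matrix.vecMulVec ψ (star ψ) * σ).trace = (Matrix.vecMulVec ψ (star ψ) * ρ).trace ∧
      ∀ j, (A j * σ).trace = (A j * ρ).trace := by
  classical
  set B : (Fin m ⊕ Bool) → Matrix (Fin d) (Fin d) ℂ :=
    fun k => Sum.elim A (fun b => if b then Matrix.vecMulVec ψ (star ψ) else 1) k with hBdef
  have hB : ∀ k, (B k).IsHermitian := by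
    rintro (j | b)
    · exact hA j
    · rcases b with _ | _
      · show ((1 : Matrix (Fin d) (Fin d) ℂ)).IsHermitian
        exact Matrix.isHermitian_one
      · show (Matrix.vecMulVec ψ (star ψ)).IsHermitian
        rw [Matrix.IsHermitian]
        ext i j
        simp [vecMulVec_apply, conjTranspose_apply, mul_comm]
  obtain ⟨σ, h1, h2, h3⟩ := reduce B hB ρ.rank ρ hρ le_rfl
  have hcard : Fintype.card (Fin m ⊕ Bool) = m + 2 := by simp
  rw [hcard] at h2
  have htr : σ.trace = 1 := by
    have := h3 (Sum.inr false)
    simp only [hBdef, Sum.elim_inr, if_neg (Bool.false_ne_true)] at this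
    rwa [Matrix.one_mul, Matrix.one_mul, hρtr] at this
  refine ⟨σ, h1, htr, ?_, ?_, ?_⟩
  · -- rank bound
    have hc1 : ((σ.rank : ℝ)) ^ 2 ≤ (m : ℝ) + 2 := by
      have := h2
      push_cast
      exact_mod_cast this
    have hnn : (0 : ℝ) ≤ (σ.rank : ℝ) := Nat.cast_nonneg _
    have : (σ.rank : ℝ) = Real.sqrt ((σ.rank : ℝ) ^ 2) := (Real.sqrt_sq hnn).symm
    rw [this]
    calc Real.sqrt ((σ.rank : ℝ) ^ 2) ≤ Real.sqrt ((m : ℝ) + 2) := Real.sqrt_le_sqrt hc1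
      _ < Real.sqrt ((m : ℝ) + 3) := by
          apply Real.sqrt_lt_sqrt (by positivity)
          linarith
  · have := h3 (Sum.inr true)
    simpa [hBdef] using this
  · intro j
    have := h3 (Sum.inl j)
    simpa [hBdef] using this
end

section
/- Let ρ be a density operator on H_P ⊗ H_Q and H a bounded linear operator whose image and coimage lie in supp(ρ) (i.e., H vanishes on supp(ρ)^⊥ and its range is contained in supp(ρ)). Then the partial trace Tr_P(H) over H_P vanishes on (supp(Tr_P ρ))^⊥, i.e., supp(Tr_P H) ⊆ supp(Tr_P ρ). -/
open ComplexOrder Matrix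

/-- Partial trace over the first tensor factor, for operators on `ℂ^p ⊗ ℂ^q`
represented as matrices indexed by `Fin p × Fin q`. -/
noncomputable def ptraceFst (p q : ℕ) (M : Matrix (Fin p × Fin q) (Fin p × Fin q) ℂ) :
    Matrix (Fin q) (Fin q) ℂ :=
  fun i j => ∑ k : Fin p, M (k, i) (k, j)

/-- **Preservation of containment relationships under partial traces.**
Let `ρ` be a density operator on `H_P ⊗ H_Q` and `H` an operator whose image and coimage
lie in `supp ρ` (it vanishes on `(supp ρ)ᗮ = ker ρ` and its range is contained in
`supp ρ = range ρ`). Then the partial trace `Tr_P H` vanishes on `(supp (Tr_P ρ))ᗮ`,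
i.e. `supp (Tr_P H) ⊆ supp (Tr_P ρ)`. -/
theorem ptrace_support_containment (p q : ℕ)
    (ρ H : Matrix (Fin p × Fin q) (Fin p × Fin q) ℂ)
    (hρ : ρ.PosSemidef) (hρtr : ρ.trace = 1)
    (hker : LinearMap.ker (Matrix.toLin' ρ) ≤ LinearMap.ker (Matrix.toLin' H))
    (hrange : LinearMap.range (Matrix.toLin' H) ≤ LinearMap.range (Matrix.toLin' ρ)) :
    LinearMap.ker (Matrix.toLin' (ptraceFst p q ρ)) ≤
      LinearMap.ker (Matrix.toLin' (ptraceFst p q H)) := by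
  intro x hx
  rw [LinearMap.mem_ker, Matrix.toLin'_apply] at hx ⊢
  -- the lifted vectors e_k ⊗ x
  set v : Fin p → (Fin p × Fin q → ℂ) := fun k => fun a => if a.1 = k then x a.2 else 0 with hv
  have hmv : ∀ (M : Matrix (Fin p × Fin q) (Fin p × Fin q) ℂ) (k : Fin p) (a : Fin p × Fin q),
      (M *ᵥ v k) a = ∑ j, M a (k, j) * x j := by
    intro M k a
    simp only [Matrix.mulVec, dotProduct, hv, Fintype.sum_prod_type, mul_ite, mul_zero]
    rw [Finset.sum_comm]
    simp
  -- each quadratic form value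
  have hquad : ∀ k, star (v k) ⬝ᵥ ρ *ᵥ (v k) = ∑ i, ∑ j, star (x i) * ρ (k, i) (k, j) * x j := by
    intro k
    have : star (v k) ⬝ᵥ ρ *ᵥ (v k) = ∑ a : Fin p × Fin q, star (v k a) * (ρ *ᵥ v k) a := rfl
    rw [this]
    simp only [hmv]
    simp only [hmv, hv, Fintype.sum_prod_type, apply_ite (star : ℂ → ℂ), star_zero,
      ite_mul, zero_mul]
    rw [Finset.sum_comm]
    simp only [Finset.sum_ite_eq', Finset.mem_univ, if_true, Finset.mul_sum]
    refine Finset.sum_congr rfl fun i _ => Finset.sum_congr rfl fun j _ => ?_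
    ring
  -- sum of quadratic forms equals the quadratic form of ptraceFst ρ at x
  have hsum : ∑ k, star (v k) ⬝ᵥ ρ *ᵥ (v k) = star x ⬝ᵥ (ptraceFst p q ρ) *ᵥ x := by
    simp only [hquad]
    simp only [dotProduct, Matrix.mulVec, ptraceFst, Pi.star_apply,
      Finset.mul_sum, Finset.sum_mul]
    rw [Finset.sum_comm]
    refine Finset.sum_congr rfl fun i _ => ?_
    rw [Finset.sum_comm]
    refine Finset.sum_congr rfl fun j _ => Finset.sum_congr rfl fun k _ => ?_
    ring
  have hxz : star x ⬝ᵥ (ptraceFst p q ρ) *ᵥ x = 0 := by rw [hx]; simp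
  have hterm : ∀ k ∈ Finset.univ, star (v k) ⬝ᵥ ρ *ᵥ (v k) = 0 := by
    have hnn : ∀ k ∈ (Finset.univ : Finset (Fin p)), 0 ≤ star (v k) ⬝ᵥ ρ *ᵥ (v k) :=
      fun k _ => hρ.dotProduct_mulVec_nonneg (v k)
    intro k hk
    have : ∑ k, star (v k) ⬝ᵥ ρ *ᵥ (v k) = 0 := by rw [hsum, hxz]
    exact (Finset.sum_eq_zero_iff_of_nonneg hnn).mp this k hk
  have hρv : ∀ k, ρ *ᵥ (v k) = 0 := fun k =>
    (hρ.dotProduct_mulVec_zero_iff (v k)).mp (hterm k (Finset.mem_univ k))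
  have hHv : ∀ k, H *ᵥ (v k) = 0 := by
    intro k
    have : v k ∈ LinearMap.ker (Matrix.toLin' ρ) := by
      rw [LinearMap.mem_ker, Matrix.toLin'_apply]; exact hρv k
    have := hker this
    rwa [LinearMap.mem_ker, Matrix.toLin'_apply] at this
  funext i
  show (ptraceFst p q H *ᵥ x) i = 0
  have key : ∀ k, (H *ᵥ (v k)) (k, i) = 0 := fun k => by rw [hHv k]; rfl
  have hz : ∑ k, (H *ᵥ (v k)) (k, i) = 0 := by simp [key]
  rw [← hz]
  simp only [hmv H]
  simp only [Matrix.mulVec, dotProduct, ptraceFst, Finset.sum_mul]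
  rw [Finset.sum_comm]
end

section
/- Let ψ = a₀|0⟩ + a₁|1⟩ + a₂|2⟩ and φ = b₀|0⟩ + b₁|1⟩ + b₂|2⟩ be unit vectors in R³ with a₁ ≠ 0, b₁ > 0, a₁ > 0. If ψ†M_kψ = φ†M_kφ for k ∈ {1,2,3,5,6,7} (Gell-Mann matrices excluding M₄ and M₈), then φ = ψ. -/
open Matrix Complex

/-- The Gell-Mann matrices `M₁, M₂, M₃, M₅, M₆, M₇`. -/
noncomputable def gm1 : Matrix (Fin 3) (Fin 3) ℂ := !![0, 1, 0; 1, 0, 0; 0, 0, 0]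
noncomputable def gm2 : Matrix (Fin 3) (Fin 3) ℂ := !![0, -I, 0; I, 0, 0; 0, 0, 0]
noncomputable def gm3 : Matrix (Fin 3) (Fin 3) ℂ := !![1, 0, 0; 0, -1, 0; 0, 0, 0]
noncomputable def gm5 : Matrix (Fin 3) (Fin 3) ℂ := !![0, 0, -I; 0, 0, 0; I, 0, 0]
noncomputable def gm6 : Matrix (Fin 3) (Fin 3) ℂ := !![0, 0, 0; 0, 0, 1; 0, 1, 0]
noncomputable def gm7 : Matrix (Fin 3) (Fin 3) ℂ := !![0, 0, 0; 0, 0, -I; 0, I, 0]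

/-- Expectation value `⟨ψ|M|ψ⟩` of an observable `M` in a qutrit state with real
coordinates `ψ : Fin 3 → ℝ`. -/
noncomputable def expval (M : Matrix (Fin 3) (Fin 3) ℂ) (ψ : Fin 3 → ℝ) : ℂ :=
  star (fun i => (ψ i : ℂ)) ⬝ᵥ M.mulVec (fun i => (ψ i : ℂ))

/-!
For a real state, `⟨M₁⟩ = 2 a₀ a₁` and `-⟨M₃⟩ = a₁² - a₀²` are the imaginary and real parts
of `(a₁ + i a₀)²`. A complex number with positive real part is determined by its square, so
`a₀` and `a₁ > 0` are recovered; `a₂` then follows from `⟨M₆⟩ = 2 a₁ a₂`.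
-/

section ExpectationValues

variable (x y z : ℝ)

lemma expval_gm1 : expval gm1 ![x, y, z] = ((2 * x * y : ℝ) : ℂ) := by
  simp only [expval, gm1, dotProduct, mulVec, Fin.sum_univ_three, of_apply, cons_val',
    cons_val_fin_one, cons_val_zero, cons_val_one, cons_val,
    Pi.star_apply, RCLike.star_def, conj_ofReal]
  push_cast
  ring

lemma expval_gm3 : expval gm3 ![x, y, z] = ((x ^ 2 - y ^ 2 : ℝ) : ℂ) := by
  simp only [expval, gm3, dotProduct, mulVec, Fin.sum_univ_three, of_apply, cons_val',
    cons_val_fin_one, cons_val_zero, cons_val_one, cons_val,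
    Pi.star_apply, RCLike.star_def, conj_ofReal]
  push_cast
  ring

lemma expval_gm6 : expval gm6 ![x, y, z] = ((2 * y * z : ℝ) : ℂ) := by
  simp only [expval, gm6, dotProduct, mulVec, Fin.sum_univ_three, of_apply, cons_val',
    cons_val_fin_one, cons_val_zero, cons_val_one, cons_val,
    Pi.star_apply, RCLike.star_def, conj_ofReal]
  push_cast
  ring

end ExpectationValues

lemma eq_of_mul_eq_of_sq_sub_sq_eq {K : Type*} [Field K] [LinearOrder K] [IsStrictOrderedRing K]
    {x y x' y' : K} (hy : 0 < y) (hy' : 0 < y')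
    (hmul : x * y = x' * y') (hsq : x ^ 2 - y ^ 2 = x' ^ 2 - y' ^ 2) :
    x' = x ∧ y' = y := by
  have hfactor : (y' ^ 2 - y ^ 2) * (y' ^ 2 + x ^ 2) = 0 := by
    linear_combination y' ^ 2 * hsq - (x * y + x' * y') * hmul
  have hsq' : y' ^ 2 = y ^ 2 := by
    have : y' ^ 2 + x ^ 2 ≠ 0 := by positivity
    exact sub_eq_zero.mp ((mul_eq_zero.mp hfactor).resolve_right this)
  have hyy : y' = y := (pow_left_inj₀ hy'.le hy.le two_ne_zero).mp hsq'
  refine ⟨?_, hyy⟩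
  subst hyy
  exact (mul_right_cancel₀ hy'.ne' hmul).symm

theorem qutrit_udp_A6_general (a₀ a₁ a₂ b₀ b₁ b₂ : ℝ)
    (ha₁ : 0 < a₁) (hb₁ : 0 < b₁)
    (h : ∀ M ∈ [gm1, gm2, gm3, gm5, gm6, gm7],
      expval M ![a₀, a₁, a₂] = expval M ![b₀, b₁, b₂]) :
    b₀ = a₀ ∧ b₁ = a₁ ∧ b₂ = a₂ := by
  have h1 := h gm1 (by simp)
  have h3 := h gm3 (by simp)
  have h6 := h gm6 (by simp)
  simp only [expval_gm1, expval_gm3, expval_gm6, ofReal_inj] at h1 h3 h6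
  obtain ⟨rfl, rfl⟩ :=
    eq_of_mul_eq_of_sq_sub_sq_eq ha₁ hb₁ (by linear_combination h1 / 2) h3
  refine ⟨rfl, rfl, mul_left_cancel₀ hb₁.ne' ?_⟩
  linear_combination -h6 / 2

/-- A real qutrit state `ψ = a₀|0⟩ + a₁|1⟩ + a₂|2⟩` with `a₁ > 0` is uniquely determined
among real unit vectors `φ` with `b₁ > 0` by the expectation values of the Gell-Mann
matrices `M₁, M₂, M₃, M₅, M₆, M₇` (framework `𝐀₆`, without `M₄` and `M₈`). -/
theorem qutrit_udp_A6 (a₀ a₁ a₂ b₀ b₁ b₂ : ℝ)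
    (ha : a₀ ^ 2 + a₁ ^ 2 + a₂ ^ 2 = 1) (hb : b₀ ^ 2 + b₁ ^ 2 + b₂ ^ 2 = 1)
    (ha₁ : 0 < a₁) (hb₁ : 0 < b₁)
    (h : ∀ M ∈ [gm1, gm2, gm3, gm5, gm6, gm7],
      expval M ![a₀, a₁, a₂] = expval M ![b₀, b₁, b₂]) :
    b₀ = a₀ ∧ b₁ = a₁ ∧ b₂ = a₂ :=
  qutrit_udp_A6_general a₀ a₁ a₂ b₀ b₁ b₂ ha₁ hb₁ h
end

section
/- Let ψ = a₀|0⟩ + a₂|2⟩ be a real unit qutrit state with a₀ ≠ 0 and a₂ ≠ 0. Then the state φ = a₀|0⟩ − a₂|2⟩ satisfies ψ†M_kψ = φ†M_kφ for all Gell-Mann matrices M_k with k ∈ {1,2,3,5,6,7}, yet |⟨ψ|φ⟩|² = (a₀² − a₂²)² < 1. Hence ψ is not uniquely determined among pure states by this measurement set. -/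
/-!
Flipping the sign of the `|2⟩` amplitude of `a₀|0⟩ + a₂|2⟩` changes `⟨ψ|M|ψ⟩` only through
the cross term `a₀ a₂ (M₀₂ + M₂₀)`. This symmetric coupling of `|0⟩` and `|2⟩` is exactly what
`M₄` measures; it vanishes for every other Gell-Mann matrix. The overlap of the two
states is `a₀² − a₂²`, and `(a₀² − a₂²)² = (a₀² + a₂²)² − 4a₀²a₂² < 1`.
-/

open Matrix Complex

theorem expval_vecCons_zero (M : Matrix (Fin 3) (Fin 3) ℂ) (a c : ℝ) :
    expval M ![a, 0, c] = a ^ 2 * M 0 0 + a * c * (M 0 2 + M 2 0) + c ^ 2 * M 2 2 := by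
  simp only [expval, dotProduct, Pi.star_apply, RCLike.star_def, conj_ofReal, mulVec,
    Fin.sum_univ_three, cons_val_zero, cons_val_one, cons_val, ofReal_zero, mul_zero, add_zero,
    zero_mul]
  ring

theorem expval_neg_last_eq (M : Matrix (Fin 3) (Fin 3) ℂ) (hM : M 0 2 + M 2 0 = 0) (a c : ℝ) :
    expval M ![a, 0, c] = expval M ![a, 0, -c] := by
  rw [expval_vecCons_zero, expval_vecCons_zero, hM]
  push_cast
  ring

theorem overlap_neg_last (a c : ℝ) :
    star (fun i => ((![a, 0, c] : Fin 3 → ℝ) i : ℂ)) ⬝ᵥ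
      (fun i => ((![a, 0, -c] : Fin 3 → ℝ) i : ℂ)) = ((a ^ 2 - c ^ 2 : ℝ) : ℂ) := by
  simp only [dotProduct, Pi.star_apply, RCLike.star_def, conj_ofReal, Fin.sum_univ_three,
    cons_val_zero, cons_val_one, cons_val, ofReal_zero, mul_zero, add_zero, ofReal_neg, mul_neg,
    ofReal_sub, ofReal_pow]
  ring

theorem sq_sub_sq_sq_lt {a c : ℝ} (ha : a ≠ 0) (hc : c ≠ 0) :
    (a ^ 2 - c ^ 2) ^ 2 < (a ^ 2 + c ^ 2) ^ 2 := by
  have : 0 < a ^ 2 * c ^ 2 := by positivity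
  nlinarith

/-- The states `ψ = a₀|0⟩ + a₂|2⟩` and `φ = a₀|0⟩ − a₂|2⟩` (with `a₀, a₂ ≠ 0`) have the
same expectation values for the Gell-Mann matrices `M₁, M₂, M₃, M₅, M₆, M₇`, yet their
fidelity `(a₀² − a₂²)²` is strictly less than `1`; hence `ψ` is not UDP under this
measurement framework. -/
theorem qutrit_not_udp_A6 (a₀ a₂ : ℝ)
    (ha : a₀ ^ 2 + a₂ ^ 2 = 1) (ha₀ : a₀ ≠ 0) (ha₂ : a₂ ≠ 0) :
    (∀ M ∈ [gm1, gm2, gm3, gm5, gm6, gm7],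
      expval M ![a₀, 0, a₂] = expval M ![a₀, 0, -a₂]) ∧
    ‖(star (fun i => ((![a₀, 0, a₂] : Fin 3 → ℝ) i : ℂ)) ⬝ᵥ
        (fun i => ((![a₀, 0, -a₂] : Fin 3 → ℝ) i : ℂ)))‖ ^ 2 = (a₀ ^ 2 - a₂ ^ 2) ^ 2 ∧
    (a₀ ^ 2 - a₂ ^ 2) ^ 2 < 1 := by
  refine ⟨fun M hM => expval_neg_last_eq M ?_ a₀ a₂, ?_, ?_⟩
  · simp only [List.mem_cons, List.not_mem_nil, or_false] at hM
    rcases hM with rfl | rfl | rfl | rfl | rfl | rfl <;>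
      simp [gm1, gm2, gm3, gm5, gm6, gm7]
  · rw [overlap_neg_last, Complex.norm_real, Real.norm_eq_abs, sq_abs]
  · simpa [ha] using sq_sub_sq_sq_lt ha₀ ha₂
end

section
/- For Θ ∈ R and the states ψ = sin Θ |0000⟩ + cos Θ |1111⟩ and φ_γ = sin Θ |0000⟩ + e^{iγ} cos Θ |1111⟩ in (C²)^⊗4, all two-qubit reduced density matrices of φ_γ equal those of ψ, and the fidelity |⟨ψ|φ_γ⟩|² = |sin²Θ + e^{iγ}cos²Θ|² is minimized over γ at γ = π, with minimum value cos²(2Θ). -/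
open Matrix Complex

/-- Two-qubit reduced density matrix of a four-qubit pure state `ψ`, keeping qubits
`j` and `k` and tracing out the other two qubits. -/
noncomputable def rdm2 (ψ : (Fin 4 → Fin 2) → ℂ) (j k : Fin 4) :
    Matrix (Fin 2 × Fin 2) (Fin 2 × Fin 2) ℂ :=
  fun a b => ∑ f : Fin 4 → Fin 2,
    if f j = a.1 ∧ f k = a.2 then
      ψ f * (starRingEnd ℂ) (ψ (Function.update (Function.update f j b.1) k b.2))
    else 0

/-- The generalized GHZ state `sin Θ |0000⟩ + e^{iγ} cos Θ |1111⟩`. -/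
noncomputable def ghzPhase (Θ γ : ℝ) : (Fin 4 → Fin 2) → ℂ :=
  fun f => if f = (fun _ => 0) then (Real.sin Θ : ℂ)
    else if f = (fun _ => 1) then Complex.exp (γ * I) * (Real.cos Θ : ℂ) else 0

/-- Inner product `⟨ψ|φ⟩` of four-qubit states. -/
noncomputable def inner4 (ψ φ : (Fin 4 → Fin 2) → ℂ) : ℂ :=
  ∑ f : Fin 4 → Fin 2, (starRingEnd ℂ) (ψ f) * φ f

/-! A relative phase `e^{iγ}` between `|0000⟩` and `|1111⟩` can be moved onto any single
qubit `i`, where it acts as the diagonal unitary `diag(1, e^{iγ})`. Choosing `i` outside the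
two kept qubits, the phase cancels against its conjugate in the partial trace, so every
two-qubit marginal is unchanged. The overlap with the unphased state is
`sin²Θ + e^{iγ} cos²Θ`, whose modulus is at least `|sin²Θ - cos²Θ| = |cos 2Θ|` by the
reverse triangle inequality, with equality at `e^{iπ} = -1`. -/

lemma Fin.exists_ne_and_ne_of_four (j k : Fin 4) : ∃ i : Fin 4, i ≠ j ∧ i ≠ k := by
  revert j k; decide

lemma rdm2_eq_of_eq_phase_mul {ψ φ : (Fin 4 → Fin 2) → ℂ} {i j k : Fin 4} (hij : i ≠ j)
    (hik : i ≠ k) (c : Fin 2 → ℂ) (hc : ∀ b, ‖c b‖ = 1) (hφ : ∀ f, φ f = c (f i) * ψ f) :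
    rdm2 φ j k = rdm2 ψ j k := by
  ext a b
  refine Finset.sum_congr rfl fun f _ => ?_
  set g := Function.update (Function.update f j b.1) k b.2
  have hg : g i = f i := by
    simp only [g, Function.update_of_ne hik, Function.update_of_ne hij]
  have hunit : c (f i) * (starRingEnd ℂ) (c (f i)) = 1 := by
    rw [Complex.mul_conj', hc, Complex.ofReal_one, one_pow]
  split_ifs
  · rw [hφ, hφ, hg, map_mul]
    linear_combination ψ f * (starRingEnd ℂ) (ψ g) * hunit
  · rfl

lemma ghzPhase_eq_phase_mul (Θ γ : ℝ) (i : Fin 4) (f : Fin 4 → Fin 2) :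
    ghzPhase Θ γ f = (if f i = 1 then Complex.exp (γ * I) else 1) * ghzPhase Θ 0 f := by
  unfold ghzPhase
  by_cases h0 : f = fun _ => 0
  · simp [h0]
  · by_cases h1 : f = fun _ => 1
    · have h10 : (fun _ : Fin 4 => (1 : Fin 2)) ≠ fun _ => 0 := by decide
      simp [h1, h10]
    · simp [h0, h1]

lemma rdm2_ghzPhase (Θ γ : ℝ) (j k : Fin 4) :
    rdm2 (ghzPhase Θ γ) j k = rdm2 (ghzPhase Θ 0) j k := by
  obtain ⟨i, hij, hik⟩ := Fin.exists_ne_and_ne_of_four j k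
  refine rdm2_eq_of_eq_phase_mul hij hik (fun b => if b = 1 then Complex.exp (γ * I) else 1)
    (fun b => ?_) (ghzPhase_eq_phase_mul Θ γ i)
  split_ifs
  · exact Complex.norm_exp_ofReal_mul_I γ
  · exact norm_one

lemma inner4_ghzPhase (Θ γ : ℝ) : inner4 (ghzPhase Θ 0) (ghzPhase Θ γ) =
    (Real.sin Θ : ℂ) ^ 2 + Complex.exp (γ * I) * (Real.cos Θ : ℂ) ^ 2 := by
  have h01 : (fun _ : Fin 4 => (0 : Fin 2)) ≠ fun _ => 1 := by decide
  rw [inner4, Fintype.sum_eq_add _ _ h01 fun f ⟨h0, h1⟩ => by simp [ghzPhase, h0, h1]]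
  simp only [ghzPhase, h01.symm, if_true, if_false, Complex.ofReal_zero,
    zero_mul, Complex.exp_zero, one_mul, Complex.conj_ofReal]
  ring

lemma sq_norm_sub_norm_le_sq_norm_add {E : Type*} [SeminormedAddCommGroup E] (x y : E) :
    (‖x‖ - ‖y‖) ^ 2 ≤ ‖x + y‖ ^ 2 := by
  have h := abs_norm_sub_norm_le x (-y)
  rw [norm_neg, sub_neg_eq_add] at h
  exact sq_le_sq.mpr (h.trans (le_abs_self _))

lemma sq_norm_sin_sq_sub_cos_sq (Θ : ℝ) :
    ‖(Real.sin Θ : ℂ) ^ 2 - (Real.cos Θ : ℂ) ^ 2‖ ^ 2 = Real.cos (2 * Θ) ^ 2 := by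
  have h : (Real.sin Θ : ℂ) ^ 2 - (Real.cos Θ : ℂ) ^ 2 = ((-Real.cos (2 * Θ) : ℝ) : ℂ) := by
    rw [Real.cos_two_mul']
    push_cast
    ring
  rw [h, Complex.norm_real, Real.norm_eq_abs, sq_abs, neg_sq]

lemma cos_two_mul_sq_le_sq_norm_sin_sq_add (Θ γ : ℝ) : Real.cos (2 * Θ) ^ 2 ≤
    ‖(Real.sin Θ : ℂ) ^ 2 + Complex.exp (γ * I) * (Real.cos Θ : ℂ) ^ 2‖ ^ 2 := by
  have hlower := sq_norm_sub_norm_le_sq_norm_add ((Real.sin Θ : ℂ) ^ 2)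
    (Complex.exp (γ * I) * (Real.cos Θ : ℂ) ^ 2)
  simp only [norm_mul, norm_pow, Complex.norm_exp_ofReal_mul_I, one_mul, Complex.norm_real,
    Real.norm_eq_abs, sq_abs] at hlower
  rwa [Real.cos_two_mul', ← neg_sq, neg_sub]

/-- For `ψ = sin Θ |0000⟩ + cos Θ |1111⟩` and `φ_γ = sin Θ |0000⟩ + e^{iγ} cos Θ |1111⟩`,
all two-qubit reduced density matrices of `φ_γ` equal those of `ψ`, the fidelity equals
`|sin²Θ + e^{iγ} cos²Θ|²`, and it is minimized over `γ` at `γ = π` with value `cos²(2Θ)`. -/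
theorem ghz_family_rdm_and_fidelity (Θ : ℝ) :
    (∀ γ : ℝ, ∀ j k : Fin 4, j ≠ k →
      rdm2 (ghzPhase Θ γ) j k = rdm2 (ghzPhase Θ 0) j k) ∧
    (∀ γ : ℝ, ‖inner4 (ghzPhase Θ 0) (ghzPhase Θ γ)‖ ^ 2 =
      ‖(Real.sin Θ : ℂ) ^ 2 + Complex.exp (γ * I) * (Real.cos Θ : ℂ) ^ 2‖ ^ 2) ∧
    (∀ γ : ℝ, ‖inner4 (ghzPhase Θ 0) (ghzPhase Θ Real.pi)‖ ^ 2 ≤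
      ‖inner4 (ghzPhase Θ 0) (ghzPhase Θ γ)‖ ^ 2) ∧
    ‖inner4 (ghzPhase Θ 0) (ghzPhase Θ Real.pi)‖ ^ 2 = Real.cos (2 * Θ) ^ 2 := by
  have hpi : ‖inner4 (ghzPhase Θ 0) (ghzPhase Θ Real.pi)‖ ^ 2 = Real.cos (2 * Θ) ^ 2 := by
    rw [inner4_ghzPhase, Complex.exp_pi_mul_I, neg_one_mul, ← sub_eq_add_neg,
      sq_norm_sin_sq_sub_cos_sq]
  refine ⟨fun γ j k _ => rdm2_ghzPhase Θ γ j k, fun γ => by rw [inner4_ghzPhase],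
    fun γ => ?_, hpi⟩
  rw [hpi, inner4_ghzPhase]
  exact cos_two_mul_sq_le_sq_norm_sin_sq_add Θ γ
end
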